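/- Fix α > 0, c > 0 and R₀ > 0. Let μ be a finite nonnegative Borel measure on ℝ² supported in the closed ball B(0,R₀) such that μ(closedBall(0,r)) = c·r^α for every 0 ≤ r ≤ R₀. Then μ belongs to H^{−1}(ℝ²), i.e. ∫_{ℝ²} (1 + |ξ|²)^{−1} |μ̂(ξ)|² dξ < ∞, where μ̂(ξ) = ∫_{ℝ²} e^{−2πi⟨x,ξ⟩} dμ(x) is the Fourier transform of the measure μ. -/

import Mathlib

open MeasureTheory Set Metric
open scoped ENNReal Classical Real

/-- The plane `ℝ²` with the Euclidean norm. -/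
abbrev Plane := EuclideanSpace ℝ (Fin 2)

/-- The Fourier transform of a finite measure `μ` on `ℝ²`:
`μ̂(ξ) = ∫ e^{-2πi⟨x,ξ⟩} dμ(x)`. -/
noncomputable def fourierMeasure (μ : Measure Plane) (ξ : Plane) : ℂ :=
  ∫ x, Complex.exp (-(2 * Real.pi * (inner ℝ x ξ : ℝ)) * Complex.I) ∂μ

/-- A finite measure `μ` belongs to `H^{-1}(ℝ²)` if
`∫ (1+|ξ|²)⁻¹ |μ̂(ξ)|² dξ < ∞`. -/
noncomputable def memHminusOne (μ : Measure Plane) : Prop :=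
  ∫⁻ ξ : Plane, ENNReal.ofReal ((1 + ‖ξ‖ ^ 2)⁻¹ * ‖fourierMeasure μ ξ‖ ^ 2) < ⊤

/-! Write `(1 + |ξ|²)⁻¹ = ∫₀^∞ e^{-t(1+|ξ|²)} dt` and `|μ̂|²` as the Fourier transform of the
image of `μ ⊗ μ` under `(x, y) ↦ x - y`. The Fourier transform of a Gaussian and Tonelli turn
the `H^{-1}` norm into the energy `∫∫ G(|x - y|) dμ dμ` of the kernel
`G(r) = ∫₀^∞ e^{-t} (π/t) e^{-π²r²/t} dt`, and `e^{-a} ≤ a^{-s}` gives `G(r) ≲ r^{-2s}`.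
A ball of radius `r` lies in an annulus of width `3r` about the origin, so the hypothesis yields
`μ(B(x, r)) ≲ r^β` with `β = min α 1`; a layer-cake estimate then bounds
`∫ |x - y|^{-2s} dμ(y)` uniformly in `x` as soon as `2s < β`. -/

open Real
open scoped Complex RealInnerProductSpace

lemma rpow_sub_rpow_le_mul_of_one_le {α u v : ℝ} (hα : 1 ≤ α) (hu : 0 ≤ u) (huv : u ≤ v) :
    v ^ α - u ^ α ≤ α * v ^ (α - 1) * (v - u) := by
  rcases (hu.trans huv).eq_or_lt with hv | hv
  · obtain rfl : u = 0 := le_antisymm (huv.trans hv.symm.le) hu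
    simp [← hv]
  have hber := one_add_mul_self_le_rpow_one_add (by linarith [div_nonneg hu hv.le] :
    -1 ≤ u / v - 1) hα
  rw [add_sub_cancel, div_rpow hu hv.le, le_div_iff₀ (rpow_pos_of_pos hv α)] at hber
  have hv1 : v ^ α = v ^ (α - 1) * v := by rw [← rpow_add_one hv.ne', sub_add_cancel]
  have : (1 + α * (u / v - 1)) * v ^ α = v ^ α - α * v ^ (α - 1) * (v - u) := by
    rw [hv1]; field_simp; ring
  linarith

lemma rpow_sub_rpow_le_of_sub_le {α R u v h : ℝ} (hα : 0 < α) (hu : 0 ≤ u) (huv : u ≤ v)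
    (hvR : v ≤ R) (hvh : v - u ≤ h) :
    v ^ α - u ^ α ≤ max 1 (α * R ^ (α - 1)) * h ^ min α 1 := by
  have hh : 0 ≤ h := (sub_nonneg.2 huv).trans hvh
  rcases le_total α 1 with hα1 | hα1
  · rw [min_eq_left hα1]
    have hsub : v ^ α ≤ u ^ α + (v - u) ^ α := by
      simpa using rpow_add_le_add_rpow hu (sub_nonneg.2 huv) hα.le hα1
    have hmono : (v - u) ^ α ≤ h ^ α := rpow_le_rpow (sub_nonneg.2 huv) hvh hα.le
    nlinarith [le_max_left 1 (α * R ^ (α - 1)), rpow_nonneg hh α]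
  · rw [min_eq_right hα1, rpow_one]
    calc v ^ α - u ^ α ≤ α * v ^ (α - 1) * (v - u) := rpow_sub_rpow_le_mul_of_one_le hα1 hu huv
      _ ≤ α * R ^ (α - 1) * h := by
          have := (hu.trans huv).trans hvR
          gcongr; linarith
      _ ≤ max 1 (α * R ^ (α - 1)) * h := by gcongr; exact le_max_right _ _

lemma lintegral_Ioi_one_ofReal_mul_rpow_neg {C p : ℝ} (hC : 0 ≤ C) (hp : 1 < p) :
    ∫⁻ t in Ioi 1, ENNReal.ofReal (C * t ^ (-p)) = ENNReal.ofReal (C / (p - 1)) := by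
  have hexp : -p < -1 := neg_lt_neg hp
  rw [← ofReal_integral_eq_lintegral_ofReal
    ((integrableOn_Ioi_rpow_of_lt hexp one_pos).const_mul C)
    ((ae_restrict_iff' measurableSet_Ioi).2 (ae_of_all _ fun t (ht : 1 < t) ↦ by
      have := rpow_nonneg (zero_le_one.trans ht.le) (-p); positivity)),
    integral_const_mul, integral_Ioi_rpow_of_lt hexp one_pos, one_rpow]
  congr 1
  have : p - 1 ≠ 0 := (sub_pos.2 hp).ne'
  rw [show -p + 1 = -(p - 1) by ring]
  field_simp

section BallGrowth

open Filter Topology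

variable {X : Type*} [PseudoMetricSpace X] [MeasurableSpace X] {μ : Measure X}

lemma measure_closedBall_eq_projIcc {o : X} {α c R₀ : ℝ} (hα : 0 < α) (hR₀ : 0 ≤ R₀)
    (hsupp : μ (closedBall o R₀)ᶜ = 0)
    (hball : ∀ r, 0 ≤ r → r ≤ R₀ → μ (closedBall o r) = ENNReal.ofReal (c * r ^ α)) (ρ : ℝ) :
    μ (closedBall o ρ) = ENNReal.ofReal (c * (projIcc 0 R₀ hR₀ ρ : ℝ) ^ α) := by
  rcases lt_or_ge ρ 0 with hρ | hρ
  · rw [closedBall_eq_empty.2 hρ, projIcc_of_le_left _ hρ.le]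
    simp [zero_rpow hα.ne']
  rcases le_or_gt ρ R₀ with hρR | hρR
  · rw [projIcc_of_mem _ ⟨hρ, hρR⟩, hball ρ hρ hρR]
  · rw [projIcc_of_right_le _ hρR.le, ← hball R₀ hR₀ le_rfl]
    refine le_antisymm (measure_mono_ae (ae_le_set.2 ?_))
      (measure_mono (closedBall_subset_closedBall hρR.le))
    exact measure_mono_null (sdiff_subset_compl _ _) hsupp

theorem measure_closedBall_le_of_measure_closedBall_center [OpensMeasurableSpace X] {o : X}
    {α c R₀ : ℝ} (hα : 0 < α) (hc : 0 ≤ c) (hR₀ : 0 ≤ R₀) (hsupp : μ (closedBall o R₀)ᶜ = 0)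
    (hball : ∀ r, 0 ≤ r → r ≤ R₀ → μ (closedBall o r) = ENNReal.ofReal (c * r ^ α))
    (x : X) {r : ℝ} (hr : 0 < r) :
    μ (closedBall x r) ≤
      ENNReal.ofReal (c * max 1 (α * R₀ ^ (α - 1)) * 3 ^ min α 1 * r ^ min α 1) := by
  set d := dist x o
  set u : ℝ := ↑(projIcc 0 R₀ hR₀ (d - 2 * r))
  set v : ℝ := ↑(projIcc 0 R₀ hR₀ (d + r))
  have hu : 0 ≤ u := (projIcc 0 R₀ hR₀ _).2.1
  have huv : u ≤ v := monotone_projIcc hR₀ (by linarith)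
  have hvR : v ≤ R₀ := (projIcc 0 R₀ hR₀ _).2.2
  have hvu : v - u ≤ 3 * r := by
    have := abs_projIcc_sub_projIcc (h := hR₀) (c := d + r) (d := d - 2 * r)
    rw [show d + r - (d - 2 * r) = 3 * r by ring,
      abs_of_pos (by positivity : (0 : ℝ) < 3 * r)] at this
    exact (le_abs_self _).trans this
  have hannulus : closedBall x r ⊆ closedBall o (d + r) \ closedBall o (d - 2 * r) := by
    intro y hy
    rw [mem_closedBall] at hy
    simp only [Set.mem_sdiff, mem_closedBall, not_le]
    constructor
    · linarith [dist_triangle y x o]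
    · linarith [dist_triangle_left x o y]
  have hradial := measure_closedBall_eq_projIcc hα hR₀ hsupp hball
  calc μ (closedBall x r)
      ≤ μ (closedBall o (d + r)) - μ (closedBall o (d - 2 * r)) := by
        refine (measure_mono hannulus).trans_eq (measure_sdiff
          (closedBall_subset_closedBall (by linarith)) measurableSet_closedBall.nullMeasurableSet ?_)
        rw [hradial]
        exact ENNReal.ofReal_ne_top
    _ = ENNReal.ofReal (c * v ^ α - c * u ^ α) := by
        rw [hradial, hradial, ENNReal.ofReal_sub _ (by positivity)]
    _ ≤ _ := by
        apply ENNReal.ofReal_le_ofReal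
        have := rpow_sub_rpow_le_of_sub_le hα hu huv hvR hvu
        rw [mul_rpow (by norm_num) hr.le] at this
        nlinarith

lemma measure_singleton_eq_zero_of_measure_closedBall_le {x : X} {C β : ℝ} (hβ : 0 < β)
    (hbd : ∀ r, 0 < r → μ (closedBall x r) ≤ ENNReal.ofReal (C * r ^ β)) : μ {x} = 0 := by
  have hlim : Tendsto (fun r : ℝ ↦ ENNReal.ofReal (C * r ^ β)) (𝓝[>] 0) (𝓝 0) := by
    have : ContinuousAt (fun r : ℝ ↦ ENNReal.ofReal (C * r ^ β)) 0 :=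
      ENNReal.continuous_ofReal.continuousAt.comp
        (continuousAt_const.mul (continuousAt_rpow_const 0 β (Or.inr hβ.le)))
    simpa [zero_rpow hβ.ne'] using this.tendsto.mono_left nhdsWithin_le_nhds
  refine nonpos_iff_eq_zero.1 (ge_of_tendsto hlim (eventually_nhdsWithin_of_forall fun r hr ↦ ?_))
  exact (measure_mono (singleton_subset_iff.2 (mem_closedBall_self (le_of_lt hr)))).trans
    (hbd r hr)

lemma lintegral_rpow_neg_dist_le [OpensMeasurableSpace X] {C β σ : ℝ} (hC : 0 ≤ C)
    (hσ : 0 < σ) (hσβ : σ < β) {x : X}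
    (hbd : ∀ r, 0 < r → μ (closedBall x r) ≤ ENNReal.ofReal (C * r ^ β)) :
    ∫⁻ y, ENNReal.ofReal (dist x y ^ (-σ)) ∂μ ≤ μ univ + ENNReal.ofReal (C / (β / σ - 1)) := by
  have hlevel : ∀ t : ℝ, 0 < t → {y | t < dist x y ^ (-σ)} ⊆ closedBall x (t ^ (-σ)⁻¹) := by
    intro t ht y hy
    have hd : 0 < dist x y := by
      rcases (dist_nonneg (x := x) (y := y)).eq_or_lt with h | h
      · rw [mem_ofPred_eq, ← h, zero_rpow (by simpa using hσ.ne')] at hy; linarith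
      · exact h
    rw [mem_closedBall, dist_comm]
    exact ((lt_rpow_inv_iff_of_neg hd ht (by linarith)).2 hy).le
  rw [lintegral_eq_lintegral_meas_lt μ (ae_of_all _ fun y ↦ by positivity) (by fun_prop),
    ← Ioc_union_Ioi_eq_Ioi zero_le_one, lintegral_union measurableSet_Ioi
      (Ioc_disjoint_Ioi le_rfl),
    ← lintegral_Ioi_one_ofReal_mul_rpow_neg hC ((one_lt_div hσ).2 hσβ)]
  gcongr ?_ + ?_
  · calc ∫⁻ t in Ioc 0 1, μ {y | t < dist x y ^ (-σ)}
        ≤ ∫⁻ _ in Ioc (0 : ℝ) 1, μ univ := by gcongr; exact subset_univ _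
      _ = μ univ := by simp
  · refine setLIntegral_mono' measurableSet_Ioi fun t (ht : 1 < t) ↦ ?_
    have ht0 : 0 < t := one_pos.trans ht
    calc μ {y | t < dist x y ^ (-σ)} ≤ μ (closedBall x (t ^ (-σ)⁻¹)) :=
          measure_mono (hlevel t ht0)
      _ ≤ ENNReal.ofReal (C * (t ^ (-σ)⁻¹) ^ β) := hbd _ (rpow_pos_of_pos ht0 _)
      _ = ENNReal.ofReal (C * t ^ (-(β / σ))) := by
          rw [← rpow_mul ht0.le]; congr 3; field_simp

end BallGrowth

section Fourier

variable {E : Type*} [NormedAddCommGroup E] [InnerProductSpace ℝ E] [MeasurableSpace E]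
  [BorelSpace E] [SecondCountableTopology E]

lemma charFun_map_sub_prod_self (μ : Measure E) [IsFiniteMeasure μ] (t : E) :
    charFun ((μ.prod μ).map (fun p ↦ p.1 - p.2)) t = ((‖charFun μ t‖ ^ 2 : ℝ) : ℂ) := by
  have hsplit : ∀ p : E × E, cexp (⟪p.1 - p.2, t⟫ * Complex.I) =
      cexp (⟪p.1, t⟫ * Complex.I) * cexp (⟪p.2, -t⟫ * Complex.I) := by
    intro p
    rw [← Complex.exp_add, inner_sub_left, inner_neg_right]
    push_cast
    ring_nf
  rw [charFun_apply, integral_map (by fun_prop) (by fun_prop)]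
  simp_rw [hsplit]
  rw [integral_prod_mul (fun x ↦ cexp (⟪x, t⟫ * Complex.I)) (fun y ↦ cexp (⟪y, -t⟫ * Complex.I)),
    ← charFun_apply, ← charFun_apply, charFun_neg, Complex.mul_conj,
    Complex.normSq_eq_norm_sq]

theorem integral_cexp_neg_mul_sq_norm_mul_charFun [FiniteDimensional ℝ E] (ρ : Measure E)
    [IsFiniteMeasure ρ] {b : ℂ} (hb : 0 < b.re) (a : ℝ) :
    ∫ ξ, cexp (-b * ‖ξ‖ ^ 2) * charFun ρ (a • ξ) =
      ∫ x, (π / b) ^ (Module.finrank ℝ E / 2 : ℂ) * cexp (-(a ^ 2 * ‖x‖ ^ 2) / (4 * b)) ∂ρ := by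
  have hgauss : Integrable (fun ξ : E ↦ cexp (-b * ‖ξ‖ ^ 2)) := by
    simpa using GaussianFourier.integrable_cexp_neg_mul_sq_norm_add hb 0 (0 : E)
  have hint : Integrable (Function.uncurry fun (ξ : E) (x : E) ↦
      cexp (-b * ‖ξ‖ ^ 2) * cexp (⟪x, a • ξ⟫ * Complex.I)) (volume.prod ρ) := by
    refine (hgauss.norm.mul_prod (integrable_const (1 : ℝ))).mono' (by fun_prop)
      (ae_of_all _ fun ⟨ξ, x⟩ ↦ ?_)
    simp only [Function.uncurry_apply_pair, norm_mul, Complex.norm_exp_ofReal_mul_I, mul_one,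
      le_refl]
  simp_rw [charFun_apply, ← integral_const_mul]
  rw [integral_integral_swap hint]
  congr 1
  ext x
  convert GaussianFourier.integral_cexp_neg_mul_sq_norm_add hb (a * Complex.I) x using 2
  · ext ξ
    rw [← Complex.exp_add, inner_smul_right, real_inner_comm]
    push_cast
    ring_nf
  · congr 1
    ring_nf
    simp only [Complex.I_sq]
    ring

end Fourier

lemma fourierMeasure_eq_charFun (μ : Measure Plane) (ξ : Plane) :
    fourierMeasure μ ξ = charFun μ (-(2 * π) • ξ) := by
  simp only [fourierMeasure, charFun_apply, inner_smul_right]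
  congr 1
  ext x
  push_cast
  ring_nf

lemma measurable_fourierMeasure (μ : Measure Plane) [IsFiniteMeasure μ] :
    Measurable (fourierMeasure μ) := by
  simp_rw [funext (fourierMeasure_eq_charFun μ)]
  exact measurable_charFun.comp (measurable_const_smul _)

theorem integral_gaussian_mul_norm_sq_fourierMeasure (μ : Measure Plane) [IsFiniteMeasure μ]
    {t : ℝ} (ht : 0 < t) :
    ∫ ξ, rexp (-(t * ‖ξ‖ ^ 2)) * ‖fourierMeasure μ ξ‖ ^ 2 =
      ∫ p, π / t * rexp (-((π * ‖p.1 - p.2‖) ^ 2 / t)) ∂(μ.prod μ) := by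
  apply Complex.ofReal_injective
  rw [← integral_complex_ofReal, ← integral_complex_ofReal]
  convert integral_cexp_neg_mul_sq_norm_mul_charFun ((μ.prod μ).map (fun p ↦ p.1 - p.2))
    (b := t) (by simpa using ht) (-(2 * π)) using 1
  · congr 1
    ext ξ
    rw [charFun_map_sub_prod_self, ← fourierMeasure_eq_charFun]
    push_cast
    ring_nf
  · rw [integral_map (by fun_prop) (by fun_prop)]
    congr 1
    ext p
    simp only [finrank_euclideanSpace_fin]
    push_cast
    ring_nf
    rw [Complex.cpow_one]
    ring

lemma integrable_exp_neg_mul_sq_norm {V : Type*} [NormedAddCommGroup V] [InnerProductSpace ℝ V]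
    [FiniteDimensional ℝ V] [MeasurableSpace V] [BorelSpace V] {t : ℝ} (ht : 0 < t) :
    Integrable (fun v : V ↦ rexp (-(t * ‖v‖ ^ 2))) := by
  refine (GaussianFourier.integrable_cexp_neg_mul_sq_norm_add (V := V) (b := t)
    (by simpa using ht) 0 0).norm.congr (ae_of_all _ fun v ↦ ?_)
  simp [Complex.norm_exp, ← Complex.ofReal_pow]

theorem lintegral_gaussian_mul_norm_sq_fourierMeasure (μ : Measure Plane) [IsFiniteMeasure μ]
    {t : ℝ} (ht : 0 < t) :
    ∫⁻ ξ, ENNReal.ofReal (rexp (-(t * ‖ξ‖ ^ 2)) * ‖fourierMeasure μ ξ‖ ^ 2) =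
      ∫⁻ p, ENNReal.ofReal (π / t * rexp (-((π * ‖p.1 - p.2‖) ^ 2 / t))) ∂(μ.prod μ) := by
  have hF : Integrable (fun ξ : Plane ↦ rexp (-(t * ‖ξ‖ ^ 2)) * ‖fourierMeasure μ ξ‖ ^ 2) := by
    refine ((integrable_exp_neg_mul_sq_norm ht).mul_const (μ.real univ ^ 2)).mono'
      ((by fun_prop : Continuous _).aestronglyMeasurable.mul
        ((measurable_fourierMeasure μ).norm.pow_const 2).aestronglyMeasurable)
      (ae_of_all _ fun ξ ↦ ?_)
    have := fourierMeasure_eq_charFun μ ξ ▸ norm_charFun_le (μ := μ) (-(2 * π) • ξ)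
    rw [Real.norm_of_nonneg (by positivity)]
    gcongr
  have hG : Integrable (fun p : Plane × Plane ↦ π / t * rexp (-((π * ‖p.1 - p.2‖) ^ 2 / t)))
      (μ.prod μ) := by
    refine (integrable_const (π / t)).mono' (by fun_prop) (ae_of_all _ fun p ↦ ?_)
    rw [Real.norm_of_nonneg (by positivity)]
    refine mul_le_of_le_one_right (by positivity) (exp_le_one_iff.2 ?_)
    have : 0 ≤ (π * ‖p.1 - p.2‖) ^ 2 / t := by positivity
    linarith
  rw [← ofReal_integral_eq_lintegral_ofReal hF (ae_of_all _ fun _ ↦ by positivity),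
    ← ofReal_integral_eq_lintegral_ofReal hG (ae_of_all _ fun _ ↦ by positivity),
    integral_gaussian_mul_norm_sq_fourierMeasure μ ht]

lemma ofReal_inv_eq_lintegral_exp {b : ℝ} (hb : 0 < b) :
    ENNReal.ofReal b⁻¹ = ∫⁻ t in Ioi 0, ENNReal.ofReal (rexp (-b * t)) := by
  rw [← ofReal_integral_eq_lintegral_ofReal (exp_neg_integrableOn_Ioi 0 hb)
    (ae_of_all _ fun _ ↦ (exp_pos _).le), integral_exp_mul_Ioi (neg_lt_zero.2 hb)]
  simp

/-- The inverse Fourier transform of `(1 + |ξ|²)⁻¹` on `ℝ²`, as a function of `|x|`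
(it equals `2 K₀(2π |x|)`). -/
noncomputable def besselKernel (r : ℝ) : ℝ≥0∞ :=
  ∫⁻ t in Ioi 0, ENNReal.ofReal (rexp (-t)) * ENNReal.ofReal (π / t * rexp (-((π * r) ^ 2 / t)))

theorem lintegral_inv_one_add_sq_mul_norm_sq_fourierMeasure (μ : Measure Plane)
    [IsFiniteMeasure μ] :
    ∫⁻ ξ, ENNReal.ofReal ((1 + ‖ξ‖ ^ 2)⁻¹ * ‖fourierMeasure μ ξ‖ ^ 2) =
      ∫⁻ p, besselKernel ‖p.1 - p.2‖ ∂(μ.prod μ) := by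
  have hsub : ∀ ξ : Plane, ENNReal.ofReal ((1 + ‖ξ‖ ^ 2)⁻¹ * ‖fourierMeasure μ ξ‖ ^ 2) =
      ∫⁻ t in Ioi 0, ENNReal.ofReal (rexp (-t)) *
        ENNReal.ofReal (rexp (-(t * ‖ξ‖ ^ 2)) * ‖fourierMeasure μ ξ‖ ^ 2) := by
    intro ξ
    rw [ENNReal.ofReal_mul (by positivity), ofReal_inv_eq_lintegral_exp (by positivity),
      ← lintegral_mul_const' _ _ ENNReal.ofReal_ne_top]
    congr 1
    ext t
    rw [← ENNReal.ofReal_mul (exp_pos _).le, ← ENNReal.ofReal_mul (exp_pos _).le, ← mul_assoc,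
      ← exp_add]
    ring_nf
  simp_rw [hsub]
  have hmeas := measurable_fourierMeasure μ
  rw [lintegral_lintegral_swap (by fun_prop)]
  calc ∫⁻ t in Ioi 0, ∫⁻ ξ, ENNReal.ofReal (rexp (-t)) *
        ENNReal.ofReal (rexp (-(t * ‖ξ‖ ^ 2)) * ‖fourierMeasure μ ξ‖ ^ 2)
      = ∫⁻ t in Ioi 0, ∫⁻ p, ENNReal.ofReal (rexp (-t)) *
          ENNReal.ofReal (π / t * rexp (-((π * ‖p.1 - p.2‖) ^ 2 / t))) ∂(μ.prod μ) := by
        refine setLIntegral_congr_fun measurableSet_Ioi fun t ht ↦ ?_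
        rw [lintegral_const_mul' _ _ ENNReal.ofReal_ne_top,
          lintegral_gaussian_mul_norm_sq_fourierMeasure μ ht,
          lintegral_const_mul' _ _ ENNReal.ofReal_ne_top]
    _ = ∫⁻ p, besselKernel ‖p.1 - p.2‖ ∂(μ.prod μ) := lintegral_lintegral_swap (by fun_prop)

lemma exp_neg_le_rpow_neg {u s : ℝ} (hu : 0 < u) (hs0 : 0 ≤ s) (hs1 : s ≤ 1) :
    rexp (-u) ≤ u ^ (-s) := by
  rw [rpow_neg hu.le, exp_neg]
  refine inv_anti₀ (rpow_pos_of_pos hu s) ?_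
  calc u ^ s ≤ (1 + u) ^ s := rpow_le_rpow hu.le (by linarith) hs0
    _ ≤ 1 + s * u := rpow_one_add_le_one_add_mul_self (by linarith) hs0 hs1
    _ ≤ u + 1 := by nlinarith
    _ ≤ rexp u := add_one_le_exp u

lemma besselKernel_le {r s : ℝ} (hr : 0 < r) (hs0 : 0 < s) (hs1 : s ≤ 1) :
    besselKernel r ≤ ENNReal.ofReal (π * Gamma s * (π * r) ^ (-(2 * s))) := by
  have hΓ : ENNReal.ofReal (Gamma s) =
      ∫⁻ t in Ioi 0, ENNReal.ofReal (rexp (-t) * t ^ (s - 1)) := by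
    rw [Gamma_eq_integral hs0, ofReal_integral_eq_lintegral_ofReal (GammaIntegral_convergent hs0)
      ((ae_restrict_iff' measurableSet_Ioi).2 (ae_of_all _ fun t (ht : 0 < t) ↦ by positivity))]
  calc besselKernel r
      ≤ ∫⁻ t in Ioi 0, ENNReal.ofReal (π * (π * r) ^ (-(2 * s))) *
          ENNReal.ofReal (rexp (-t) * t ^ (s - 1)) := by
        refine setLIntegral_mono' measurableSet_Ioi fun t (ht : 0 < t) ↦ ?_
        rw [← ENNReal.ofReal_mul (exp_pos _).le, ← ENNReal.ofReal_mul (by positivity)]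
        refine ENNReal.ofReal_le_ofReal ?_
        have hgauss : rexp (-((π * r) ^ 2 / t)) ≤ (π * r) ^ (-(2 * s)) * t ^ s := by
          refine (exp_neg_le_rpow_neg (by positivity) hs0.le hs1).trans_eq ?_
          rw [div_rpow (by positivity) ht.le, ← rpow_natCast, ← rpow_mul (by positivity),
            rpow_neg ht.le, div_inv_eq_mul]
          norm_num
        calc rexp (-t) * (π / t * rexp (-((π * r) ^ 2 / t)))
            ≤ rexp (-t) * (π / t * ((π * r) ^ (-(2 * s)) * t ^ s)) := by gcongr
          _ = π * (π * r) ^ (-(2 * s)) * (rexp (-t) * t ^ (s - 1)) := by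
            rw [rpow_sub_one ht.ne']
            field_simp
    _ = ENNReal.ofReal (π * Gamma s * (π * r) ^ (-(2 * s))) := by
        rw [lintegral_const_mul' _ _ ENNReal.ofReal_ne_top, ← hΓ,
          ← ENNReal.ofReal_mul (by positivity)]
        ring_nf

theorem lintegral_besselKernel_lt_top (μ : Measure Plane) [IsFiniteMeasure μ] {C β : ℝ}
    (hC : 0 ≤ C) (hβ : 0 < β)
    (hbd : ∀ x r, 0 < r → μ (closedBall x r) ≤ ENNReal.ofReal (C * r ^ β)) :
    ∫⁻ p, besselKernel ‖p.1 - p.2‖ ∂(μ.prod μ) < ⊤ := by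
  set s := min β 1 / 4 with hs
  have hs0 : 0 < s := by positivity
  have hs1 : s ≤ 1 := by linarith [min_le_right β 1, hs]
  have h2s : 2 * s < β := by linarith [min_le_left β 1, hs]
  set A := π * Gamma s * π ^ (-(2 * s))
  have hoff : ∀ᵐ p ∂(μ.prod μ), p.1 ≠ p.2 := by
    refine (Measure.ae_prod_iff_ae_ae (measurableSet_eq_fun measurable_fst measurable_snd).compl).2
      (ae_of_all _ fun x ↦ ?_)
    exact (measure_eq_zero_iff_ae_notMem.1
      (measure_singleton_eq_zero_of_measure_closedBall_le hβ (hbd x))).mono fun y hy ↦ Ne.symm hy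
  calc ∫⁻ p, besselKernel ‖p.1 - p.2‖ ∂(μ.prod μ)
      ≤ ∫⁻ p, ENNReal.ofReal A * ENNReal.ofReal (dist p.1 p.2 ^ (-(2 * s))) ∂(μ.prod μ) := by
        refine lintegral_mono_ae (hoff.mono fun p hp ↦ ?_)
        have hd : 0 < ‖p.1 - p.2‖ := norm_pos_iff.2 (sub_ne_zero.2 hp)
        refine (besselKernel_le hd hs0 hs1).trans_eq ?_
        rw [← ENNReal.ofReal_mul (by positivity), dist_eq_norm,
          mul_rpow pi_pos.le hd.le, ← mul_assoc]
    _ = ENNReal.ofReal A * ∫⁻ x, ∫⁻ y, ENNReal.ofReal (dist x y ^ (-(2 * s))) ∂μ ∂μ := by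
        rw [lintegral_const_mul _ (by fun_prop), lintegral_prod _ (by fun_prop)]
    _ ≤ ENNReal.ofReal A * ∫⁻ _, (μ univ + ENNReal.ofReal (C / (β / (2 * s) - 1))) ∂μ := by
        gcongr with x
        exact lintegral_rpow_neg_dist_le hC (by positivity) h2s (hbd x)
    _ < ⊤ := by
        simp [lintegral_const, ENNReal.mul_lt_top, measure_lt_top]

/-- If `μ` is a finite nonnegative Borel measure on `ℝ²` supported in `closedBall 0 R₀`
with `μ (closedBall 0 r) = c r^α` for all `0 ≤ r ≤ R₀` (where `α, c, R₀ > 0`), then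
`μ ∈ H^{-1}(ℝ²)`, i.e. `∫ (1+|ξ|²)⁻¹ |μ̂(ξ)|² dξ < ∞`. -/
theorem memHminusOne_of_power_balls (α c R₀ : ℝ)
    (hα : 0 < α) (hc : 0 < c) (hR₀ : 0 < R₀)
    (μ : Measure Plane) [IsFiniteMeasure μ]
    (hsupp : μ (Metric.closedBall (0 : Plane) R₀)ᶜ = 0)
    (hball : ∀ r : ℝ, 0 ≤ r → r ≤ R₀ →
      μ (Metric.closedBall (0 : Plane) r) = ENNReal.ofReal (c * r ^ α)) :
    memHminusOne μ := by
  rw [memHminusOne, lintegral_inv_one_add_sq_mul_norm_sq_fourierMeasure]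
  exact lintegral_besselKernel_lt_top μ (by positivity) (lt_min hα one_pos) fun x r hr ↦
    measure_closedBall_le_of_measure_closedBall_center hα hc.le hR₀.le hsupp hball x hr
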